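/- Let 1 < q₂ ≤ q₁ < ∞, let A ∈ R^{m×N}, and set r = q₂(q₁−1)/(q₁(q₂−1)). For any real s with 1 ≤ s ≤ N^{1/r}, the q-ratio CMSVs satisfy ρ_{q₁,s}(A) ≥ ρ_{q₂, s^r}(A). -/

import Mathlib

open Finset Matrix

noncomputable def l1 {N : ℕ} (z : Fin N → ℝ) : ℝ := ∑ i, |z i|
noncomputable def lq {N : ℕ} (q : ℝ) (z : Fin N → ℝ) : ℝ := (∑ i, |z i| ^ q) ^ (1/q)
noncomputable def l2 {m : ℕ} (v : Fin m → ℝ) : ℝ := Real.sqrt (∑ i, (v i)^2)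
noncomputable def linf {N : ℕ} (z : Fin N → ℝ) : ℝ := ⨆ i, |z i|
open scoped Classical in
noncomputable def l0 {N : ℕ} (z : Fin N → ℝ) : ℕ := (Finset.univ.filter (fun i => z i ≠ 0)).card
noncomputable def sparsityQ {N : ℕ} (q : ℝ) (z : Fin N → ℝ) : ℝ := (l1 z / lq q z) ^ (q/(q-1))
noncomputable def cmsv {m N : ℕ} (q s : ℝ) (A : Matrix (Fin m) (Fin N) ℝ) : ℝ :=
  sInf { r | ∃ z : Fin N → ℝ, z ≠ 0 ∧ sparsityQ q z ≤ s ∧ r = l2 (A.mulVec z) / lq q z }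


/-! Since `q₂ ≤ q₁`, the `ℓ^q` norms satisfy `‖z‖_{q₁} ≤ ‖z‖_{q₂}`. Hence
`‖z‖₁ / ‖z‖_{q₂} ≤ ‖z‖₁ / ‖z‖_{q₁}`, and raising both sides to the exponents in the definition of
`s_q` gives `s_{q₂}(z) ≤ s_{q₁}(z) ^ r`. So every `z` admissible for `ρ_{q₁,s}` is admissible for
`ρ_{q₂,s^r}`, and `‖Az‖₂ / ‖z‖_{q₁} ≥ ‖Az‖₂ / ‖z‖_{q₂} ≥ ρ_{q₂,s^r}`. -/

section Norms

variable {N : ℕ}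

lemma l1_nonneg (z : Fin N → ℝ) : 0 ≤ l1 z :=
  sum_nonneg fun _ _ => abs_nonneg _

lemma sum_abs_rpow_nonneg (q : ℝ) (z : Fin N → ℝ) : 0 ≤ ∑ i, |z i| ^ q :=
  sum_nonneg fun _ _ => Real.rpow_nonneg (abs_nonneg _) _

lemma lq_nonneg (q : ℝ) (z : Fin N → ℝ) : 0 ≤ lq q z :=
  Real.rpow_nonneg (sum_abs_rpow_nonneg q z) _

lemma lq_pos (q : ℝ) {z : Fin N → ℝ} (hz : z ≠ 0) : 0 < lq q z := by
  obtain ⟨i, hi⟩ := Function.ne_iff.mp hz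
  refine Real.rpow_pos_of_pos (sum_pos' (fun j _ => Real.rpow_nonneg (abs_nonneg _) _) ?_) _
  exact ⟨i, mem_univ i, Real.rpow_pos_of_pos (abs_pos.mpr hi) _⟩

lemma lq_rpow {q : ℝ} (hq : q ≠ 0) (z : Fin N → ℝ) : lq q z ^ q = ∑ i, |z i| ^ q := by
  rw [lq, one_div, Real.rpow_inv_rpow (sum_abs_rpow_nonneg q z) hq]

lemma abs_le_lq {q : ℝ} (hq : 0 < q) (z : Fin N → ℝ) (i : Fin N) : |z i| ≤ lq q z := by
  rw [← Real.rpow_le_rpow_iff (abs_nonneg _) (lq_nonneg q z) hq, lq_rpow hq.ne']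
  exact single_le_sum (fun j _ => Real.rpow_nonneg (abs_nonneg (z j)) q) (mem_univ i)

lemma lq_le_lq {p q : ℝ} (hp : 0 < p) (hpq : p ≤ q) (z : Fin N → ℝ) : lq q z ≤ lq p z := by
  have hq : 0 < q := hp.trans_le hpq
  have split (x : ℝ) (hx : 0 ≤ x) : x ^ q = x ^ p * x ^ (q - p) := by
    rw [← Real.rpow_add' hx (by linarith)]
    ring_nf
  -- each coordinate is bounded by the `ℓ^p` norm, so `|zᵢ|^q ≤ |zᵢ|^p ‖z‖_p^(q-p)`
  have hsum : ∑ i, |z i| ^ q ≤ lq p z ^ q := calc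
    ∑ i, |z i| ^ q ≤ ∑ i, |z i| ^ p * lq p z ^ (q - p) := by
      gcongr with i
      rw [split _ (abs_nonneg _)]
      gcongr
      exact abs_le_lq hp z i
    _ = lq p z ^ q := by rw [← sum_mul, ← lq_rpow hp.ne', ← split _ (lq_nonneg p z)]
  rw [← Real.rpow_le_rpow_iff (lq_nonneg q z) (lq_nonneg p z) hq, lq_rpow hq.ne']
  exact hsum

end Norms

section Sparsity

variable {N : ℕ}

lemma sparsityQ_nonneg (q : ℝ) (z : Fin N → ℝ) : 0 ≤ sparsityQ q z :=
  Real.rpow_nonneg (div_nonneg (l1_nonneg z) (lq_nonneg q z)) _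

lemma sparsityQ_single {q : ℝ} (hq : q ≠ 0) (i : Fin N) : sparsityQ q (Pi.single i 1) = 1 := by
  have hl1 : l1 (Pi.single i (1 : ℝ)) = 1 := by
    simp [l1, apply_ite abs, Pi.single_apply]
  have hlq : lq q (Pi.single i (1 : ℝ)) = 1 := by
    simp [lq, Pi.single_apply, apply_ite abs, apply_ite (· ^ q), Real.zero_rpow hq]
  rw [sparsityQ, hl1, hlq, div_one, Real.one_rpow]

lemma sparsityQ_le_sparsityQ_rpow {q₁ q₂ : ℝ} (hq₂ : 1 < q₂) (hq : q₂ ≤ q₁) {z : Fin N → ℝ}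
    (hz : z ≠ 0) : sparsityQ q₂ z ≤ sparsityQ q₁ z ^ (q₂ * (q₁ - 1) / (q₁ * (q₂ - 1))) := by
  have hq₁ : 1 < q₁ := hq₂.trans_le hq
  have hratio : l1 z / lq q₂ z ≤ l1 z / lq q₁ z :=
    div_le_div_of_nonneg_left (l1_nonneg z) (lq_pos q₁ hz) (lq_le_lq (by linarith) hq z)
  have hexp : q₁ / (q₁ - 1) * (q₂ * (q₁ - 1) / (q₁ * (q₂ - 1))) = q₂ / (q₂ - 1) := by
    have : q₁ - 1 ≠ 0 := by linarith
    have : q₂ - 1 ≠ 0 := by linarith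
    field_simp
  calc sparsityQ q₂ z ≤ (l1 z / lq q₁ z) ^ (q₂ / (q₂ - 1)) :=
        Real.rpow_le_rpow (div_nonneg (l1_nonneg z) (lq_nonneg q₂ z)) hratio
          (div_nonneg (by linarith) (by linarith))
    _ = sparsityQ q₁ z ^ (q₂ * (q₁ - 1) / (q₁ * (q₂ - 1))) := by
        rw [sparsityQ, ← Real.rpow_mul (div_nonneg (l1_nonneg z) (lq_nonneg q₁ z)), hexp]

end Sparsity

section CMSV

variable {m : ℕ}

lemma cmsv_of_fin_zero (q s : ℝ) (A : Matrix (Fin m) (Fin 0) ℝ) : cmsv q s A = 0 := by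
  refine (congrArg sInf (Set.eq_empty_of_forall_notMem ?_)).trans Real.sInf_empty
  rintro _ ⟨z, hz, -⟩
  exact hz (Subsingleton.elim _ _)

variable {N : ℕ} (A : Matrix (Fin m) (Fin N) ℝ)

lemma cmsv_le {q s : ℝ} {z : Fin N → ℝ} (hz : z ≠ 0) (hs : sparsityQ q z ≤ s) :
    cmsv q s A ≤ l2 (A *ᵥ z) / lq q z := by
  refine csInf_le ⟨0, ?_⟩ ⟨z, hz, hs, rfl⟩
  rintro _ ⟨y, -, -, rfl⟩
  exact div_nonneg (Real.sqrt_nonneg _) (lq_nonneg q y)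

lemma le_cmsv [Nonempty (Fin N)] {q s b : ℝ} (hq : q ≠ 0) (hs : 1 ≤ s)
    (h : ∀ z, z ≠ 0 → sparsityQ q z ≤ s → b ≤ l2 (A *ᵥ z) / lq q z) : b ≤ cmsv q s A := by
  obtain ⟨i⟩ := ‹Nonempty (Fin N)›
  refine le_csInf ⟨_, Pi.single i 1, ?_, (sparsityQ_single hq i).trans_le hs, rfl⟩ ?_
  · simp
  · rintro _ ⟨z, hz, hsz, rfl⟩
    exact h z hz hsz

end CMSV

theorem stmt7_general {m N : ℕ} (A : Matrix (Fin m) (Fin N) ℝ) (q₁ q₂ s r : ℝ)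
    (hq₂ : 1 < q₂) (hq : q₂ ≤ q₁)
    (hr : r = q₂ * (q₁ - 1) / (q₁ * (q₂ - 1)))
    (hs1 : 1 ≤ s) :
    cmsv q₂ (s ^ r) A ≤ cmsv q₁ s A := by
  have hq₁ : 1 < q₁ := hq₂.trans_le hq
  have hr0 : 0 ≤ r := by
    rw [hr]
    apply div_nonneg <;> apply mul_nonneg <;> linarith
  cases N with
  | zero => rw [cmsv_of_fin_zero, cmsv_of_fin_zero]
  | succ n =>
    refine le_cmsv A (by linarith) hs1 fun z hz hsz => ?_
    have hsparse : sparsityQ q₂ z ≤ s ^ r := calc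
      sparsityQ q₂ z ≤ sparsityQ q₁ z ^ r := hr ▸ sparsityQ_le_sparsityQ_rpow hq₂ hq hz
      _ ≤ s ^ r := Real.rpow_le_rpow (sparsityQ_nonneg q₁ z) hsz hr0
    calc cmsv q₂ (s ^ r) A ≤ l2 (A *ᵥ z) / lq q₂ z := cmsv_le A hz hsparse
      _ ≤ l2 (A *ᵥ z) / lq q₁ z :=
        div_le_div_of_nonneg_left (Real.sqrt_nonneg _) (lq_pos q₁ hz)
          (lq_le_lq (by linarith) hq z)

theorem stmt7 {m N : ℕ} (A : Matrix (Fin m) (Fin N) ℝ) (q₁ q₂ s r : ℝ)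
    (hq₂ : 1 < q₂) (hq : q₂ ≤ q₁)
    (hr : r = q₂ * (q₁ - 1) / (q₁ * (q₂ - 1)))
    (hs1 : 1 ≤ s) (hs2 : s ≤ (N : ℝ) ^ (1/r)) :
    cmsv q₂ (s ^ r) A ≤ cmsv q₁ s A :=
  stmt7_general A q₁ q₂ s r hq₂ hq hr hs1
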